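/- The optimal value of the linear program (P) — maximize z subject to Σ_{a∈δ⁺(u)} φ_a − Σ_{b∈δ⁻(u)} π_b φ_b ≤ w_u for all u ≠ t, Σ_{a∈δ⁺(t)} φ_a − Σ_{b∈δ⁻(t)} π_b φ_b = w_t − z, and φ_a ≥ 0 — equals f^t := Σ_{s∈V} w_s · Π_{st}, where Π_{st} is the maximum over st-paths of the product of arc probabilities (Π_{tt}=1). -/

import Mathlib

open scoped Classical

def IsPath {V : Type*} (adj : V → V → Prop) : V → V → List V → Prop
  | _, _, [] => False
  | s, t, [a] => a = s ∧ a = t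
  | s, t, a :: b :: p => a = s ∧ adj a b ∧ IsPath adj b t (b :: p)

noncomputable def pathRel {V : Type*} (π : V → V → ℝ) : List V → ℝ
  | [] => 1
  | [_] => 1
  | a :: b :: p => π a b * pathRel π (b :: p)

noncomputable def conn {V : Type*} (adj : V → V → Prop) (π : V → V → ℝ) (s t : V) : ℝ :=
  sSup ({x | ∃ p, IsPath adj s t p ∧ pathRel π p = x} ∪ {0})

/-!
The potentials `y u = conn adj π u t` are feasible for the dual of `(P)`: `y ≥ 0`, `y t = 1`, and
`π u v * y v ≤ y u` on every arc, since an optimal `v`-`t` path extended by the arc `u v` is a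
`u`-`t` path. Weak duality then bounds every feasible `z` by `∑ s, w s * y s`. Conversely, each
`conn adj π s t` is attained by a path, and shipping `w s` units from every `s` along such a path,
an arc `a` delivering `π_a` times what enters it, gives a feasible flow of value `∑ s, w s * y s`.
-/

section

variable {V : Type*} {adj : V → V → Prop} {π : V → V → ℝ} {s t u v : V} {p : List V}

lemma IsPath.exists_eq_cons (h : IsPath adj s t p) : ∃ q, p = s :: q := by
  match p, h with
  | [_], ⟨rfl, _⟩ => exact ⟨[], rfl⟩
  | _ :: b :: q, ⟨rfl, _, _⟩ => exact ⟨b :: q, rfl⟩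

lemma IsPath.cons (huv : adj u v) (h : IsPath adj v t p) : IsPath adj u t (u :: p) := by
  obtain ⟨q, rfl⟩ := h.exists_eq_cons
  exact ⟨rfl, huv, h⟩

lemma pathRel_cons_cons (a b : V) (p : List V) :
    pathRel π (a :: b :: p) = π a b * pathRel π (b :: p) := rfl

section Bounds

variable (hπ₀ : ∀ a b, adj a b → 0 ≤ π a b)
include hπ₀

lemma IsPath.pathRel_nonneg (h : IsPath adj s t p) : 0 ≤ pathRel π p := by
  induction p generalizing s with
  | nil => exact h.elim
  | cons a q ih =>
    match q, h with
    | [], _ => exact zero_le_one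
    | b :: r, ⟨_, hab, hp⟩ => exact mul_nonneg (hπ₀ a b hab) (ih hp)

variable (hπ₁ : ∀ a b, adj a b → π a b ≤ 1)
include hπ₁

lemma IsPath.pathRel_le_one (h : IsPath adj s t p) : pathRel π p ≤ 1 := by
  induction p generalizing s with
  | nil => exact h.elim
  | cons a q ih =>
    match q, h with
    | [], _ => exact le_rfl
    | b :: r, ⟨_, hab, hp⟩ => exact mul_le_one₀ (hπ₁ a b hab) (hp.pathRel_nonneg hπ₀) (ih hp)

lemma IsPath.pathRel_cons_cons_le {a : V} {r : List V} (h : IsPath adj s t (a :: v :: r)) :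
    pathRel π (a :: v :: r) ≤ pathRel π (v :: r) :=
  mul_le_of_le_one_left (h.2.2.pathRel_nonneg hπ₀) (hπ₁ a v h.2.1)

lemma IsPath.exists_suffix_isPath {x : V} (h : IsPath adj s t p) (hx : x ∈ p) :
    ∃ r, r <:+ p ∧ IsPath adj x t r ∧ pathRel π p ≤ pathRel π r := by
  induction p generalizing s with
  | nil => exact h.elim
  | cons a q ih =>
    obtain rfl : a = s := h.exists_eq_cons.elim fun _ e => (List.cons_eq_cons.1 e).1
    by_cases hxa : x = a
    · exact ⟨a :: q, List.suffix_refl _, hxa ▸ h, le_rfl⟩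
    match q, h with
    | [], _ => exact absurd (List.mem_singleton.1 hx) hxa
    | b :: r, h =>
      obtain ⟨r', hsuf, hpath, hle⟩ := ih h.2.2 ((List.mem_cons.1 hx).resolve_left hxa)
      exact ⟨r', hsuf.trans (List.suffix_cons a _), hpath,
        (h.pathRel_cons_cons_le hπ₀ hπ₁).trans hle⟩

lemma IsPath.exists_nodup (h : IsPath adj s t p) :
    ∃ q, IsPath adj s t q ∧ q.Nodup ∧ pathRel π p ≤ pathRel π q := by
  induction p generalizing s with
  | nil => exact h.elim
  | cons a q ih =>
    match q, h with
    | [], h => exact ⟨[a], h, List.nodup_singleton a, le_rfl⟩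
    | b :: r, ⟨hs, hab, hp⟩ =>
      subst hs
      obtain ⟨q', hq', hnd, hle⟩ := ih hp
      by_cases hmem : a ∈ q'
      · obtain ⟨r', hsuf, hpath, hle'⟩ := hq'.exists_suffix_isPath hπ₀ hπ₁ hmem
        exact ⟨r', hpath, hnd.sublist hsuf.sublist,
          ((IsPath.cons hab hp).pathRel_cons_cons_le hπ₀ hπ₁).trans (hle.trans hle')⟩
      · obtain ⟨q'', rfl⟩ := hq'.exists_eq_cons
        exact ⟨a :: b :: q'', hq'.cons hab, List.nodup_cons.2 ⟨hmem, hnd⟩,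
          mul_le_mul_of_nonneg_left hle (hπ₀ a b hab)⟩

lemma bddAbove_pathRel (s t : V) :
    BddAbove ({x | ∃ p, IsPath adj s t p ∧ pathRel π p = x} ∪ {0}) := by
  refine ⟨1, ?_⟩
  rintro x (⟨p, hp, rfl⟩ | rfl)
  exacts [hp.pathRel_le_one hπ₀ hπ₁, zero_le_one]

lemma IsPath.pathRel_le_conn (h : IsPath adj s t p) : pathRel π p ≤ conn adj π s t :=
  le_csSup (bddAbove_pathRel hπ₀ hπ₁ s t) (Or.inl ⟨p, h, rfl⟩)

end Bounds

lemma conn_nonneg (hπ₀ : ∀ a b, adj a b → 0 ≤ π a b) : 0 ≤ conn adj π s t := by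
  refine Real.sSup_nonneg ?_
  rintro x (⟨p, hp, rfl⟩ | rfl)
  exacts [hp.pathRel_nonneg hπ₀, le_rfl]

lemma conn_eq_zero (h : ¬ ∃ p, IsPath adj s t p) : conn adj π s t = 0 := by
  have : ({x | ∃ p, IsPath adj s t p ∧ pathRel π p = x} ∪ {0} : Set ℝ) = {0} := by
    simp only [Set.union_eq_right, Set.subset_singleton_iff, Set.mem_ofPred_eq]
    rintro x ⟨p, hp, -⟩
    exact absurd ⟨p, hp⟩ h
  rw [conn, this, csSup_singleton]

lemma conn_eq_pathRel (hπ₀ : ∀ a b, adj a b → 0 ≤ π a b) {q : List V} (hq : IsPath adj s t q)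
    (hmax : ∀ p, IsPath adj s t p → pathRel π p ≤ pathRel π q) :
    conn adj π s t = pathRel π q := by
  refine IsGreatest.csSup_eq ⟨Or.inl ⟨q, hq, rfl⟩, ?_⟩
  rintro x (⟨p, hp, rfl⟩ | rfl)
  exacts [hmax p hp, hq.pathRel_nonneg hπ₀]

lemma conn_self (hπ₀ : ∀ a b, adj a b → 0 ≤ π a b) (hπ₁ : ∀ a b, adj a b → π a b ≤ 1) :
    conn adj π t t = 1 :=
  conn_eq_pathRel hπ₀ (q := [t]) ⟨rfl, rfl⟩ fun _ hp => hp.pathRel_le_one hπ₀ hπ₁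

-- Only simple paths matter, and there are finitely many of them.
lemma exists_isPath_pathRel_eq_conn [Finite V] (hπ₀ : ∀ a b, adj a b → 0 ≤ π a b)
    (hπ₁ : ∀ a b, adj a b → π a b ≤ 1) (h : ∃ p, IsPath adj s t p) :
    ∃ q, IsPath adj s t q ∧ pathRel π q = conn adj π s t := by
  obtain ⟨p₀, hp₀⟩ := h
  obtain ⟨q₀, hq₀, hnd₀, -⟩ := hp₀.exists_nodup hπ₀ hπ₁
  have : Fintype V := Fintype.ofFinite V
  have hfin : {q : List V | IsPath adj s t q ∧ q.Nodup}.Finite :=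
    (List.finite_length_le V (Fintype.card V)).subset fun q hq => hq.2.length_le_card
  obtain ⟨q, ⟨hq, -⟩, hmax⟩ := Set.exists_max_image _ (pathRel π) hfin ⟨q₀, hq₀, hnd₀⟩
  refine ⟨q, hq, (conn_eq_pathRel hπ₀ hq fun p hp => ?_).symm⟩
  obtain ⟨p', hp', hnd', hle⟩ := hp.exists_nodup hπ₀ hπ₁
  exact hle.trans (hmax p' ⟨hp', hnd'⟩)

lemma mul_conn_le_conn [Finite V] (hπ₀ : ∀ a b, adj a b → 0 ≤ π a b)
    (hπ₁ : ∀ a b, adj a b → π a b ≤ 1) (huv : adj u v) :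
    π u v * conn adj π v t ≤ conn adj π u t := by
  by_cases h : ∃ p, IsPath adj v t p
  · obtain ⟨p, hp, hpconn⟩ := exists_isPath_pathRel_eq_conn hπ₀ hπ₁ h
    obtain ⟨q, rfl⟩ := hp.exists_eq_cons
    rw [← hpconn, ← pathRel_cons_cons]
    exact (hp.cons huv).pathRel_le_conn hπ₀ hπ₁
  · rw [conn_eq_zero h, mul_zero]
    exact conn_nonneg hπ₀

structure IsArcFlow (adj : V → V → Prop) (φ : V → V → ℝ) : Prop where
  nonneg : ∀ a b, 0 ≤ φ a b
  eq_zero_of_not_adj : ∀ a b, ¬ adj a b → φ a b = 0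

namespace IsArcFlow

lemma zero : IsArcFlow adj 0 := ⟨fun _ _ => le_rfl, fun _ _ _ => rfl⟩

lemma add {φ ψ : V → V → ℝ} (hφ : IsArcFlow adj φ) (hψ : IsArcFlow adj ψ) :
    IsArcFlow adj (φ + ψ) :=
  ⟨fun a b => add_nonneg (hφ.nonneg a b) (hψ.nonneg a b), fun a b h => by
    simp [hφ.eq_zero_of_not_adj a b h, hψ.eq_zero_of_not_adj a b h]⟩

lemma smul {φ : V → V → ℝ} (hφ : IsArcFlow adj φ) {c : ℝ} (hc : 0 ≤ c) :
    IsArcFlow adj (c • φ) :=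
  ⟨fun a b => mul_nonneg hc (hφ.nonneg a b), fun a b h => by
    simp [hφ.eq_zero_of_not_adj a b h]⟩

lemma sum {ι : Type*} (S : Finset ι) {φ : ι → V → V → ℝ} (hφ : ∀ i, IsArcFlow adj (φ i)) :
    IsArcFlow adj (∑ i ∈ S, φ i) := by
  induction S using Finset.cons_induction with
  | empty => exact zero
  | cons i S _ ih => rw [Finset.sum_cons]; exact (hφ i).add ih

lemma single (huv : adj u v) {c : ℝ} (hc : 0 ≤ c) :
    IsArcFlow adj (Pi.single u (Pi.single v c)) := by
  refine ⟨fun a b => ?_, fun a b h => ?_⟩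
  · exact (Pi.single_nonneg.2 (Pi.single_nonneg.2 hc) : (0 : V → V → ℝ) ≤ _) a b
  · by_cases ha : a = u
    · subst ha
      by_cases hb : b = v
      · exact absurd (hb ▸ huv) h
      · simp [hb]
    · simp [ha]

end IsArcFlow

section NetOutflow

variable [Fintype V]

noncomputable def netOutflow (π : V → V → ℝ) : (V → V → ℝ) →ₗ[ℝ] V → ℝ where
  toFun φ u := ∑ v, φ u v - ∑ v, π v u * φ v u
  map_add' φ ψ := by
    ext u
    simp only [Pi.add_apply, mul_add, Finset.sum_add_distrib]
    ring
  map_smul' c φ := by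
    ext u
    simp only [Pi.smul_apply, smul_eq_mul, RingHom.id_apply, mul_sub, Finset.mul_sum]
    ring_nf

lemma netOutflow_apply (φ : V → V → ℝ) (u : V) :
    netOutflow π φ u = ∑ v, φ u v - ∑ v, π v u * φ v u := rfl

lemma netOutflow_single (a b : V) (c : ℝ) :
    netOutflow π (Pi.single a (Pi.single b c)) = Pi.single a c - Pi.single b (π a b * c) := by
  ext u
  have hout : ∑ v, (Pi.single a (Pi.single b c) : V → V → ℝ) u v = (Pi.single a c : V → ℝ) u := by
    by_cases ha : u = a
    · subst ha; simp
    · simp [ha]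
  have hin : ∑ v, π v u * (Pi.single a (Pi.single b c) : V → V → ℝ) v u =
      (Pi.single b (π a b * c) : V → ℝ) u := by
    rw [Finset.sum_eq_single a (fun v _ hv => by simp [hv]) (by simp)]
    by_cases hb : u = b
    · subst hb; simp
    · simp [hb]
  rw [netOutflow_apply, hout, hin, Pi.sub_apply]

lemma sum_mul_netOutflow (y : V → ℝ) (φ : V → V → ℝ) :
    ∑ u, y u * netOutflow π φ u = ∑ u, ∑ v, φ u v * (y u - π u v * y v) := by
  simp only [netOutflow_apply, mul_sub, Finset.mul_sum, Finset.sum_sub_distrib]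
  rw [Finset.sum_comm (f := fun u v => y u * (π v u * φ v u))]
  congr 1 <;> exact Finset.sum_congr rfl fun _ _ => Finset.sum_congr rfl fun _ _ => by ring

end NetOutflow

noncomputable def pathFlow (π : V → V → ℝ) : List V → V → V → ℝ
  | a :: b :: p => Pi.single a (Pi.single b 1) + π a b • pathFlow π (b :: p)
  | _ => 0

lemma IsPath.isArcFlow_pathFlow (hπ₀ : ∀ a b, adj a b → 0 ≤ π a b) (h : IsPath adj s t p) :
    IsArcFlow adj (pathFlow π p) := by
  induction p generalizing s with
  | nil => exact h.elim
  | cons a q ih =>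
    match q, h with
    | [], _ => exact IsArcFlow.zero
    | b :: r, ⟨_, hab, hp⟩ =>
      exact (IsArcFlow.single hab zero_le_one).add ((ih hp).smul (hπ₀ a b hab))

lemma IsPath.netOutflow_pathFlow [Fintype V] (h : IsPath adj s t p) :
    netOutflow π (pathFlow π p) = Pi.single s 1 - Pi.single t (pathRel π p) := by
  induction p generalizing s with
  | nil => exact h.elim
  | cons a q ih =>
    match q, h with
    | [], ⟨hs, ht⟩ =>
      subst hs ht
      simp [pathFlow, pathRel]
    | b :: r, ⟨hs, _, hp⟩ =>
      subst hs
      rw [pathFlow, map_add, map_smul, netOutflow_single, ih hp, pathRel_cons_cons,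
        smul_sub, ← Pi.single_smul, ← Pi.single_smul, smul_eq_mul, smul_eq_mul, mul_one]
      abel

section Duality

variable [Fintype V] {φ : V → V → ℝ}

lemma IsArcFlow.sum_mul_netOutflow_nonneg (hφ : IsArcFlow adj φ) {y : V → ℝ}
    (hy : ∀ u v, adj u v → π u v * y v ≤ y u) : 0 ≤ ∑ u, y u * netOutflow π φ u := by
  rw [sum_mul_netOutflow]
  refine Finset.sum_nonneg fun u _ => Finset.sum_nonneg fun v _ => ?_
  by_cases huv : adj u v
  · exact mul_nonneg (hφ.nonneg u v) (sub_nonneg.2 (hy u v huv))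
  · rw [hφ.eq_zero_of_not_adj u v huv, zero_mul]

lemma IsArcFlow.le_sum_mul_of_potential (hφ : IsArcFlow adj φ) {y w : V → ℝ} {z : ℝ}
    (hy₀ : ∀ u, 0 ≤ y u) (hyt : y t = 1) (hy : ∀ u v, adj u v → π u v * y v ≤ y u)
    (hle : ∀ u, u ≠ t → netOutflow π φ u ≤ w u) (ht : netOutflow π φ t = w t - z) :
    z ≤ ∑ u, w u * y u := by
  have hterm : ∀ u, y u * netOutflow π φ u ≤ w u * y u - (Pi.single t z : V → ℝ) u := by
    intro u
    by_cases hu : u = t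
    · subst hu
      simp [hyt, ht]
    · rw [Pi.single_eq_of_ne hu, sub_zero, mul_comm (w u)]
      exact mul_le_mul_of_nonneg_left (hle u hu) (hy₀ u)
  have := (hφ.sum_mul_netOutflow_nonneg hy).trans (Finset.sum_le_sum fun u _ => hterm u)
  rwa [Finset.sum_sub_distrib, Finset.sum_pi_single', if_pos (Finset.mem_univ t), sub_nonneg]
    at this

lemma exists_isArcFlow_netOutflow_le_sum {ι : Type*} [Fintype ι] {b : ι → V → ℝ}
    (h : ∀ i, ∃ ψ, IsArcFlow adj ψ ∧ netOutflow π ψ ≤ b i ∧ netOutflow π ψ t = b i t) :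
    ∃ φ, IsArcFlow adj φ ∧ netOutflow π φ ≤ ∑ i, b i ∧ netOutflow π φ t = (∑ i, b i) t := by
  choose ψ hψ hle ht using h
  refine ⟨∑ i, ψ i, IsArcFlow.sum _ hψ, ?_, ?_⟩
  · rw [map_sum]
    exact Finset.sum_le_sum fun i _ => hle i
  · rw [map_sum, Finset.sum_apply, Finset.sum_apply]
    exact Finset.sum_congr rfl fun i _ => ht i

lemma exists_isArcFlow_netOutflow_le (hπ₀ : ∀ a b, adj a b → 0 ≤ π a b)
    (hπ₁ : ∀ a b, adj a b → π a b ≤ 1) (s : V) {c : ℝ} (hc : 0 ≤ c) :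
    ∃ ψ, IsArcFlow adj ψ ∧
      netOutflow π ψ ≤ Pi.single s c - Pi.single t (c * conn adj π s t) ∧
      netOutflow π ψ t = (Pi.single s c - Pi.single t (c * conn adj π s t) : V → ℝ) t := by
  by_cases h : ∃ p, IsPath adj s t p
  · obtain ⟨p, hp, hpconn⟩ := exists_isPath_pathRel_eq_conn hπ₀ hπ₁ h
    have hnet : netOutflow π (c • pathFlow π p) =
        Pi.single s c - Pi.single t (c * conn adj π s t) := by
      rw [map_smul, hp.netOutflow_pathFlow, smul_sub, ← Pi.single_smul, ← Pi.single_smul,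
        smul_eq_mul, smul_eq_mul, mul_one, hpconn]
    exact ⟨c • pathFlow π p, (hp.isArcFlow_pathFlow hπ₀).smul hc, hnet.le, by rw [hnet]⟩
  · have hst : s ≠ t := fun hst => h ⟨[s], rfl, hst⟩
    refine ⟨0, IsArcFlow.zero, ?_, ?_⟩
    · rw [map_zero, conn_eq_zero h, mul_zero, Pi.single_zero, sub_zero]
      exact Pi.single_nonneg.2 hc
    · simp [conn_eq_zero h, Pi.single_eq_of_ne' hst]

end Duality

end

/-- The optimal value of the generalized-flow LP `(P)` — maximize `z` subject to
`Σ_{a∈δ⁺(u)} φ_a − Σ_{b∈δ⁻(u)} π_b φ_b ≤ w_u` for all `u ≠ t`,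
`Σ_{a∈δ⁺(t)} φ_a − Σ_{b∈δ⁻(t)} π_b φ_b = w_t − z`, and `φ ≥ 0` (supported on arcs) —
equals `f^t = Σ_{s∈V} w_s · Π_{st}` (with `Π_{tt} = 1`): this value is attained and is
the greatest value of the feasible set. -/
theorem stmt_3 {V : Type*} [Fintype V] (adj : V → V → Prop) (π : V → V → ℝ) (w : V → ℝ)
    (hπ : ∀ a b, adj a b → 0 < π a b ∧ π a b ≤ 1) (hw : ∀ v, 0 ≤ w v) (t : V) :
    IsGreatest
      {z : ℝ | ∃ φ : V → V → ℝ,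
        (∀ a b, 0 ≤ φ a b) ∧
        (∀ a b, ¬ adj a b → φ a b = 0) ∧
        (∀ u, u ≠ t → (∑ v : V, φ u v) - (∑ v : V, π v u * φ v u) ≤ w u) ∧
        ((∑ v : V, φ t v) - (∑ v : V, π v t * φ v t) = w t - z)}
      (∑ s : V, w s * conn adj π s t) := by
  have hπ₀ : ∀ a b, adj a b → 0 ≤ π a b := fun a b h => (hπ a b h).1.le
  have hπ₁ : ∀ a b, adj a b → π a b ≤ 1 := fun a b h => (hπ a b h).2
  constructor
  · obtain ⟨φ, hφ, hle, ht⟩ := exists_isArcFlow_netOutflow_le_sum (t := t)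
      fun s => exists_isArcFlow_netOutflow_le hπ₀ hπ₁ s (hw s)
    have hsupply : ∑ s, (Pi.single s (w s) - Pi.single t (w s * conn adj π s t)) =
        w - Pi.single t (∑ s, w s * conn adj π s t) := by
      ext u
      by_cases hu : u = t
      · subst hu; simp [Finset.sum_apply, Finset.sum_sub_distrib]
      · simp [Finset.sum_apply, hu]
    rw [hsupply] at hle ht
    refine ⟨φ, hφ.nonneg, hφ.eq_zero_of_not_adj, fun u hu => ?_, ?_⟩
    · exact (hle u).trans_eq (by simp [hu])
    · exact ht.trans (by simp)
  · rintro z ⟨φ, hφ₀, hφadj, hle, ht⟩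
    exact IsArcFlow.le_sum_mul_of_potential ⟨hφ₀, hφadj⟩ (fun _ => conn_nonneg hπ₀)
      (conn_self hπ₀ hπ₁) (fun _ _ => mul_conn_le_conn hπ₀ hπ₁) hle ht
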